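/- If V satisfies the exact (undiscounted) self-consistency condition V(x) = max{h(x), V(f_π(x))} for all x, then the zero-sublevel set of V satisfies both constraint satisfaction and forward invariance, hence is a feasible region. -/

import Mathlib

section

variable {α β : Type*} [LinearOrder β] {f : α → α} {h V : α → β}

theorem apply_iterate_le_of_forall_max_le_right (hV : ∀ x, max (h x) (V (f x)) ≤ V x)
    (x : α) (t : ℕ) :
    V (f^[t] x) ≤ V x :=
  antitone_nat_of_succ_le (f := fun n => V (f^[n] x))
    (fun n => by
      simp only [Function.iterate_succ_apply']
      exact (le_max_right _ _).trans (hV _))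
    (Nat.zero_le t)

theorem apply_iterate_le_of_forall_max_le_left (hV : ∀ x, max (h x) (V (f x)) ≤ V x)
    (x : α) (t : ℕ) :
    h (f^[t] x) ≤ V x :=
  ((le_max_left _ _).trans (hV _)).trans (apply_iterate_le_of_forall_max_le_right hV x t)

end

/-- A solution of the exact self-consistency condition yields a zero-sublevel
set that satisfies constraint satisfaction, forward invariance, and hence is
a feasible region. -/
theorem exact_self_consistency_feasible {𝒳 : Type*} (fπ : 𝒳 → 𝒳)
    (h : 𝒳 → ℝ) (V : 𝒳 → ℝ)
    (hfix : ∀ x, V x = max (h x) (V (fπ x))) :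
    (∀ x, V x ≤ 0 → h x ≤ 0) ∧
    (∀ x, V x ≤ 0 → V (fπ x) ≤ 0) ∧
    (∀ x, V x ≤ 0 → ∀ t : ℕ, h (fπ^[t] x) ≤ 0) := by
  have hV : ∀ x, max (h x) (V (fπ x)) ≤ V x := fun x => (hfix x).ge
  exact ⟨fun x hx => (apply_iterate_le_of_forall_max_le_left hV x 0).trans hx,
    fun x hx => (apply_iterate_le_of_forall_max_le_right hV x 1).trans hx,
    fun x hx t => (apply_iterate_le_of_forall_max_le_left hV x t).trans hx⟩
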